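/- In the authenticated Byzantine agreement with classification, if 2k+1 ≤ n − t − k and each honest process p_i sends committee votes to the first 2k+1 processes in π(c_i), with a process needing t+1 votes (out of n ≥ 2t+1 processes) to obtain a committee certificate, then the committee C satisfies: |C ∩ F| ≤ k, |C ∩ H| ≥ k+1, and |C| ≤ 3k+1. -/

import Mathlib

/-!
Call an honest process *core* if every honest process classifies it as honest. All but at most
`kH` honest processes are core, and an honest process classifies every core process as honest.
Since the misclassified processes number at most `k`, the position of a core process `j` in any
honest ordering lies between its rank `r` among the core processes and `r + k`. Hence the `k + 1`
lowest-ranked core processes are voted for by every honest process, while a core process voted for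
by anyone honest has rank at most `2k + 1`. An honest process never votes for a process it
classifies as faulty, since those come after at least `n - t - k ≥ 2k + 1` processes; so every
committee member, having an honest voter, is core, misclassified honest, or misclassified faulty.
-/

/-- The (1-indexed) position of index `i` in the ordering `π(c)`. -/
def piPos {n : ℕ} (c : Fin n → Bool) (i : Fin n) : ℕ :=
  if c i then (Finset.univ.filter (fun j => j ≤ i ∧ c j)).card
  else (i : ℕ) + 1 + (Finset.univ.filter (fun j => i < j ∧ c j)).card

open Finset

section Rank

variable {α : Type*} [LinearOrder α]

def rankIn (s : Finset α) (a : α) : ℕ := #{x ∈ s | x ≤ a}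

theorem card_filter_rankIn_le (s : Finset α) (m : ℕ) : #{a ∈ s | rankIn s a ≤ m} ≤ m := by
  set T := {a ∈ s | rankIn s a ≤ m}
  rcases T.eq_empty_or_nonempty with hT | hT
  · simp [hT]
  calc #T ≤ rankIn s (T.max' hT) :=
        card_le_card fun x hx => mem_filter.2 ⟨(mem_filter.1 hx).1, T.le_max' x hx⟩
    _ ≤ m := (mem_filter.1 (T.max'_mem hT)).2

theorem le_card_filter_rankIn {s : Finset α} {m : ℕ} (hm : m ≤ #s) :
    m ≤ #{a ∈ s | rankIn s a ≤ m} := by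
  set T := {a ∈ s | rankIn s a ≤ m}
  -- otherwise the least element of `s \ T` would have rank at most `#T + 1 ≤ m`
  by_contra! hlt
  have hU : (s \ T).Nonempty := by
    rw [sdiff_nonempty]
    intro h
    have := card_le_card h
    omega
  set j := (s \ T).min' hU
  obtain ⟨hjs, hjT⟩ := mem_sdiff.1 ((s \ T).min'_mem hU)
  refine hjT (mem_filter.2 ⟨hjs, ?_⟩)
  have hsub : {x ∈ s | x ≤ j} ⊆ insert j T := by
    intro x hx
    obtain ⟨hxs, hxj⟩ := mem_filter.1 hx
    rcases hxj.lt_or_eq with hxj | rfl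
    · by_contra hxT
      have hxU : x ∈ s \ T := mem_sdiff.2 ⟨hxs, fun h => hxT (mem_insert_of_mem h)⟩
      exact (lt_irrefl x) (hxj.trans_le ((s \ T).min'_le x hxU))
    · exact mem_insert_self _ _
  calc rankIn s j ≤ #(insert j T) := card_le_card hsub
    _ ≤ #T + 1 := card_insert_le _ _
    _ ≤ m := hlt

end Rank

section Ordering

variable {n : ℕ} (c : Fin n → Bool)

theorem piPos_of_true {i : Fin n} (hi : c i = true) :
    piPos c i = #{j | j ≤ i ∧ c j = true} := if_pos hi

theorem card_filter_true_lt_piPos {i : Fin n} (hi : c i = false) :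
    #{j | c j = true} < piPos c i := by
  have hsub : ({j | c j = true} : Finset (Fin n)) ⊆
      Iio i ∪ ({j | i < j ∧ c j = true} : Finset (Fin n)) := by
    intro j hj
    have hj := (mem_filter.1 hj).2
    rcases lt_trichotomy j i with hlt | rfl | hgt
    · exact mem_union_left _ (mem_Iio.2 hlt)
    · simp [hi] at hj
    · exact mem_union_right _ (mem_filter.2 ⟨mem_univ _, hgt, hj⟩)
  have := (card_le_card hsub).trans (card_union_le _ _)
  rw [Fin.card_Iio] at this
  rw [piPos, if_neg (by simp [hi])]
  omega

theorem rankIn_le_piPos {G : Finset (Fin n)} (hG : ∀ x ∈ G, c x = true) {i : Fin n}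
    (hi : c i = true) : rankIn G i ≤ piPos c i := by
  rw [piPos_of_true c hi]
  exact card_le_card fun x hx =>
    mem_filter.2 ⟨mem_univ _, (mem_filter.1 hx).2, hG x (mem_filter.1 hx).1⟩

theorem piPos_le_rankIn_add (G : Finset (Fin n)) {i : Fin n} (hi : c i = true) :
    piPos c i ≤ rankIn G i + #(({j | c j = true} : Finset (Fin n)) \ G) := by
  rw [piPos_of_true c hi]
  refine (card_le_card fun x hx => ?_).trans (card_union_le _ _)
  obtain ⟨-, hxi, hx⟩ := mem_filter.1 hx
  by_cases hxG : x ∈ G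
  · exact mem_union_left _ (mem_filter.2 ⟨hxG, hxi⟩)
  · exact mem_union_right _ (mem_sdiff.2 ⟨mem_filter.2 ⟨mem_univ _, hx⟩, hxG⟩)

end Ordering

section Classification

variable {n : ℕ} (H F : Finset (Fin n)) (c : Fin n → Fin n → Bool)

def misclassifiedFaulty : Finset (Fin n) := {j ∈ F | ∃ i ∈ H, c i j = true}

def misclassifiedHonest : Finset (Fin n) := {j ∈ H | ∃ i ∈ H, c i j = false}

def core : Finset (Fin n) := {j ∈ H | ∀ i ∈ H, c i j = true}

variable {H F c}

theorem core_subset : core H c ⊆ H := filter_subset _ _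

theorem true_of_mem_core {i j : Fin n} (hi : i ∈ H) (hj : j ∈ core H c) : c i j = true :=
  (mem_filter.1 hj).2 i hi

theorem mem_misclassifiedHonest_of_notMem_core {j : Fin n} (hjH : j ∈ H) (hj : j ∉ core H c) :
    j ∈ misclassifiedHonest H c := by
  simp_all [core, misclassifiedHonest]

variable (H c)

theorem card_le_card_core_add : #H ≤ #(core H c) + #(misclassifiedHonest H c) := by
  rw [← card_filter_add_card_filter_not (fun j => ∀ i ∈ H, c i j = true)]
  refine Nat.add_le_add_left (card_le_card fun j hj => ?_) _
  obtain ⟨hjH, hj⟩ := mem_filter.1 hj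
  exact mem_misclassifiedHonest_of_notMem_core hjH fun h => hj (mem_filter.1 h).2

variable {H c}

theorem card_le_card_filter_true_add {i : Fin n} (hi : i ∈ H) :
    #H ≤ #{j | c i j = true} + #(misclassifiedHonest H c) :=
  (card_le_card_core_add H c).trans <| Nat.add_le_add_right
    (card_le_card fun _ hj => mem_filter.2 ⟨mem_univ _, true_of_mem_core hi hj⟩) _

theorem true_of_piPos_le {i j : Fin n} {m : ℕ} (hi : i ∈ H)
    (hm : m + #(misclassifiedHonest H c) ≤ #H) (hpos : piPos (c i) j ≤ m) : c i j = true := by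
  by_contra hj
  have := card_filter_true_lt_piPos (c i) (Bool.not_eq_true _ ▸ hj)
  have := card_le_card_filter_true_add (c := c) hi
  omega

theorem piPos_le_rankIn_core_add (hpart : ∀ i, i ∈ H ∨ i ∈ F) {i j : Fin n}
    (hi : i ∈ H) (hj : j ∈ core H c) : piPos (c i) j ≤
      rankIn (core H c) j + #(misclassifiedHonest H c) + #(misclassifiedFaulty H F c) := by
  have hsub : ({x | c i x = true} : Finset (Fin n)) \ core H c ⊆
      misclassifiedHonest H c ∪ misclassifiedFaulty H F c := by
    intro x hx
    obtain ⟨hx, hxG⟩ := mem_sdiff.1 hx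
    rcases hpart x with hxH | hxF
    · exact mem_union_left _ (mem_misclassifiedHonest_of_notMem_core hxH hxG)
    · exact mem_union_right _ (mem_filter.2 ⟨hxF, i, hi, (mem_filter.1 hx).2⟩)
  have := (card_le_card hsub).trans (card_union_le _ _)
  have := piPos_le_rankIn_add (c i) (core H c) (true_of_mem_core hi hj)
  omega

end Classification

section Committee

variable {n m q : ℕ} {H F : Finset (Fin n)} {c : Fin n → Fin n → Bool}
  {votes : Fin n → Finset (Fin n)}

def committee (votes : Fin n → Finset (Fin n)) (q : ℕ) : Finset (Fin n) :=
  {j | q ≤ #(votes j)}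

theorem exists_honest_mem_votes (hpart : ∀ i, i ∈ H ∨ i ∈ F) {j : Fin n}
    (hj : #F < #(votes j)) : ∃ i ∈ H, i ∈ votes j := by
  obtain ⟨i, hi, hiF⟩ := exists_mem_notMem_of_card_lt_card hj
  exact ⟨i, (hpart i).resolve_right hiF, hi⟩

theorem committee_inter_faulty_subset (hpart : ∀ i, i ∈ H ∨ i ∈ F)
    (hvotes : ∀ j, ∀ i ∈ H, i ∈ votes j ↔ piPos (c i) j ≤ m)
    (hm : m + #(misclassifiedHonest H c) ≤ #H) (hq : #F < q) :
    committee votes q ∩ F ⊆ misclassifiedFaulty H F c := by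
  intro j hj
  obtain ⟨hjC, hjF⟩ := mem_inter.1 hj
  obtain ⟨i, hi, hv⟩ := exists_honest_mem_votes hpart (hq.trans_le (mem_filter.1 hjC).2)
  exact mem_filter.2 ⟨hjF, i, hi, true_of_piPos_le hi hm ((hvotes j i hi).1 hv)⟩

theorem committee_inter_honest_subset (hpart : ∀ i, i ∈ H ∨ i ∈ F)
    (hvotes : ∀ j, ∀ i ∈ H, i ∈ votes j ↔ piPos (c i) j ≤ m) (hq : #F < q) :
    committee votes q ∩ H ⊆
      {j ∈ core H c | rankIn (core H c) j ≤ m} ∪ misclassifiedHonest H c := by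
  intro j hj
  obtain ⟨hjC, hjH⟩ := mem_inter.1 hj
  by_cases hjG : j ∈ core H c
  · obtain ⟨i, hi, hv⟩ := exists_honest_mem_votes hpart (hq.trans_le (mem_filter.1 hjC).2)
    have := rankIn_le_piPos (c i) (fun x hx => true_of_mem_core hi hx) (true_of_mem_core hi hjG)
    exact mem_union_left _ (mem_filter.2 ⟨hjG, this.trans ((hvotes j i hi).1 hv)⟩)
  · exact mem_union_right _ (mem_misclassifiedHonest_of_notMem_core hjH hjG)

theorem core_filter_rankIn_le_subset_committee (hpart : ∀ i, i ∈ H ∨ i ∈ F)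
    (hvotes : ∀ j, ∀ i ∈ H, i ∈ votes j ↔ piPos (c i) j ≤ m) {r : ℕ}
    (hr : r + #(misclassifiedHonest H c) + #(misclassifiedFaulty H F c) ≤ m) (hq : q ≤ #H) :
    {j ∈ core H c | rankIn (core H c) j ≤ r} ⊆ committee votes q ∩ H := by
  intro j hj
  obtain ⟨hjG, hrank⟩ := mem_filter.1 hj
  have hHv : H ⊆ votes j := fun i hi => (hvotes j i hi).2 <| by
    have := piPos_le_rankIn_core_add hpart hi hjG
    omega
  exact mem_inter.2
    ⟨mem_filter.2 ⟨mem_univ _, hq.trans (card_le_card hHv)⟩, core_subset hjG⟩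

end Committee

open Classical in
/-- In the authenticated Byzantine agreement with classification, suppose
`2k+1 ≤ n − t − k`, `t < n/2` (i.e. `2t+1 ≤ n`), at most `kF` faulty processes are misclassified
as honest by some honest process, at most `kH` honest processes are misclassified as faulty,
with `kF + kH ≤ k`.  Each honest process `i` sends a committee vote to exactly the processes in
the first `2k+1` positions of `π(c i)` (faulty voters are arbitrary), and the committee `C` is
the set of processes receiving votes from at least `t+1` distinct processes.  Then
`|C ∩ F| ≤ k`, `|C ∩ H| ≥ k+1`, and `|C| ≤ 3k+1`. -/
theorem committee_stats {n t f k kF kH : ℕ}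
    (H F : Finset (Fin n))
    (hpart : ∀ i, i ∈ H ∨ i ∈ F) (hdisj : Disjoint H F)
    (hF : F.card = f) (hft : f ≤ t) (htn : 2 * t + 1 ≤ n)
    (hk : 2 * k + 1 + t + k ≤ n)
    (c : Fin n → Fin n → Bool)
    (hkF : (F.filter (fun j => ∃ i ∈ H, c i j = true)).card ≤ kF)
    (hkH : (H.filter (fun j => ∃ i ∈ H, c i j = false)).card ≤ kH)
    (hkFH : kF + kH ≤ k)
    (votes : Fin n → Finset (Fin n))  -- votes j = set of processes that voted for j
    (hvotes : ∀ j : Fin n, ∀ i ∈ H, (i ∈ votes j ↔ piPos (c i) j ≤ 2 * k + 1))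
    (C : Finset (Fin n))
    (hC : C = Finset.univ.filter (fun j => t + 1 ≤ (votes j).card)) :
    (C ∩ F).card ≤ k ∧ k + 1 ≤ (C ∩ H).card ∧ C.card ≤ 3 * k + 1 := by
  change #(misclassifiedFaulty H F c) ≤ kF at hkF
  change #(misclassifiedHonest H c) ≤ kH at hkH
  change C = committee votes (t + 1) at hC
  subst hC
  set C := committee votes (t + 1)
  have hcover : H ∪ F = univ := eq_univ_of_forall fun i => mem_union.2 (hpart i)
  have hH : n ≤ #H + t := by
    have := card_union_of_disjoint hdisj
    rw [hcover, card_univ, Fintype.card_fin] at this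
    omega
  have hcore := card_le_card_core_add H c
  have hCF : #(C ∩ F) ≤ #(misclassifiedFaulty H F c) :=
    card_le_card (committee_inter_faulty_subset hpart hvotes (by omega) (by omega))
  have hCH_le : #(C ∩ H) ≤ 2 * k + 1 + #(misclassifiedHonest H c) :=
    (card_le_card (committee_inter_honest_subset hpart hvotes (by omega))).trans <|
      (card_union_le _ _).trans (Nat.add_le_add_right (card_filter_rankIn_le _ _) _)
  have hCH_ge : k + 1 ≤ #(C ∩ H) :=
    (le_card_filter_rankIn (by omega)).trans <|
      card_le_card (core_filter_rankIn_le_subset_committee hpart hvotes (by omega) (by omega))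
  have hC : #C ≤ #(C ∩ H) + #(C ∩ F) := by
    rw [← card_inter_add_card_sdiff C H]
    exact Nat.add_le_add_left (card_le_card fun j hj =>
      mem_inter.2 ⟨(mem_sdiff.1 hj).1, (hpart j).resolve_left (mem_sdiff.1 hj).2⟩) _
  omega
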